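/- Let ≈ be an SCER and T a string. For any 1 ≤ i ≤ n, with b = Border_T[i], the set of proper ≈-covers of T[1:i] (strings ≈-equivalent to T[1:i] excluded) equals the set of strings that are simultaneously left ≈-seeds of T[1:i] and ≈-covers of T[1:b]. Consequently, LCover_T[i] = max({l : T[1:l] is a left ≈-seed of T[1:i] and a ≈-cover of T[1:b]} ∪ {0}). -/

import Mathlib

variable {α : Type*}

/-- `substr X i j` is the 1-indexed inclusive substring `X[i:j]`. -/
def substr (X : List α) (i j : ℕ) : List α := (X.take j).drop (i - 1)

/-- A substring consistent equivalence relation (SCER). -/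
structure SCER (r : List α → List α → Prop) : Prop where
  equiv : Equivalence r
  length_eq : ∀ X Y, r X Y → X.length = Y.length
  substr_congr : ∀ X Y, r X Y → ∀ i j, 1 ≤ i → i ≤ j → j ≤ X.length →
    r (substr X i j) (substr Y i j)

/-- `B` is a `≈`-border of `T`: `B` is equivalent to a prefix and a suffix of `T`. -/
def IsBorder (r : List α → List α → Prop) (B T : List α) : Prop :=
  B.length ≤ T.length ∧ r B (T.take B.length) ∧ r B (T.drop (T.length - B.length))

/-- `C` is a `≈`-cover of `T`: there are occurrences `x 1 = 1 < ... < x m = |T|-|C|+1`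
with consecutive gaps at most `|C|`. -/
def IsCover (r : List α → List α → Prop) (C T : List α) : Prop :=
  ∃ (m : ℕ) (x : ℕ → ℕ), 1 ≤ m ∧ x 1 = 1 ∧ x m = T.length - C.length + 1 ∧
    (∀ k, 1 ≤ k → k ≤ m → r C (substr T (x k) (x k + C.length - 1))) ∧
    (∀ k, 1 < k → k ≤ m → x (k - 1) < x k ∧ x k ≤ x (k - 1) + C.length)

def IsProperCover (r : List α → List α → Prop) (C T : List α) : Prop :=
  IsCover r C T ∧ C.length < T.length

/-- A string is primitive if it has no proper `≈`-cover. -/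
def Primitive (r : List α → List α → Prop) (T : List α) : Prop :=
  ¬ ∃ C : List α, IsProperCover r C T

/-- `S` is a left `≈`-seed of `T`. -/
def IsLeftSeed (r : List α → List α → Prop) (S T : List α) : Prop :=
  ∃ k l, k ≤ l ∧ l < S.length ∧ IsCover r S (T.take (T.length - k)) ∧
    r (S.take l) (T.drop (T.length - l))

/-- `Bd` is the `≈`-border array of `T`:
`Bd i` is the maximum length of a proper `≈`-border of `T[1:i]`. -/
def BorderArr (r : List α → List α → Prop) (T : List α) (Bd : ℕ → ℕ) : Prop :=
  ∀ i, 1 ≤ i → i ≤ T.length →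
    IsGreatest {b | ∃ B : List α, B.length = b ∧ b < i ∧ IsBorder r B (T.take i)} (Bd i)

/-- `L` is the longest `≈`-cover array of `T`:
`L i = max({|C| : C proper ≈-cover of T[1:i]} ∪ {0})`. -/
def LCoverArr (r : List α → List α → Prop) (T : List α) (L : ℕ → ℕ) : Prop :=
  ∀ i, 1 ≤ i → i ≤ T.length →
    IsGreatest (insert 0 {c | ∃ C : List α, C.length = c ∧ IsProperCover r C (T.take i)})
      (L i)

/-!
A proper cover `C` of `U = T[1:i]` occurs at both ends of `U`, so it is a border and
`|C| ≤ b`; pulling its occurrences inside the suffix `U[i-b+1:i]` back through the border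
equivalence `U[1:b] ≈ U[i-b+1:i]` shows that `C` covers `U[1:b]`, and `C` is a left seed with
`k = l = 0`. Conversely, a left seed `C` covers `U[1:i-k]` with `k < |C| ≤ b`, and a cover of
`U[1:b]` pushed into the suffix covers `U[i-b+1:i]`; as `k ≤ b` these overlap enough to
cover `U`. For `LCover`, a proper cover `C` may be replaced by the prefix `T[1:|C|] ≈ C`.

Rather than with occurrence sequences, covers are best handled through the equivalent window
property: `C` occurs at `1`, and every interval `(t, t + |C|]` with `t < |U| - |C| + 1`
contains an occurrence.
-/

section Covers

variable {r : List α → List α → Prop}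

def IsOccAt (r : List α → List α → Prop) (C U : List α) (p : ℕ) : Prop :=
  1 ≤ p ∧ p ≤ U.length - C.length + 1 ∧ r C (substr U p (p + C.length - 1))

variable {C U : List α}

theorem IsCover.isOccAt_one (h : IsCover r C U) : IsOccAt r C U 1 := by
  obtain ⟨m, x, hm, hx1, -, hocc, -⟩ := h
  have hfirst := hocc 1 le_rfl hm
  rw [hx1] at hfirst
  exact ⟨le_rfl, by omega, hfirst⟩

theorem IsCover.isOccAt_last (h : IsCover r C U) :
    IsOccAt r C U (U.length - C.length + 1) := by
  obtain ⟨m, x, hm, -, hxm, hocc, -⟩ := h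
  have hlast := hocc m hm le_rfl
  rw [hxm] at hlast
  exact ⟨by omega, le_rfl, hlast⟩

theorem IsCover.length_pos (h : IsCover r C U) (hlt : C.length < U.length) :
    0 < C.length := by
  obtain ⟨m, x, hm, hx1, hxm, -, hgap⟩ := h
  by_contra hc
  rcases hm.eq_or_lt with rfl | hm
  · omega
  · have := hgap m hm le_rfl
    omega

theorem IsCover.length_le (hr : SCER r) (h : IsCover r C U) : C.length ≤ U.length := by
  have hlen := hr.length_eq _ _ h.isOccAt_one.2.2
  simp only [substr, Nat.add_sub_cancel_left, Nat.sub_self, List.drop_zero,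
    List.length_take] at hlen
  omega

theorem IsCover.congr (hr : SCER r) {C' : List α} (h : IsCover r C U) (hCC' : r C C') :
    IsCover r C' U := by
  obtain ⟨m, x, hm, hx1, hxm, hocc, hgap⟩ := h
  have hlen := hr.length_eq _ _ hCC'
  refine ⟨m, x, hm, hx1, hlen ▸ hxm, fun k hk hkm => ?_, fun k hk hkm => hlen ▸ hgap k hk hkm⟩
  rw [← hlen]
  exact hr.equiv.trans (hr.equiv.symm hCC') (hocc k hk hkm)

theorem IsCover.isBorder (hr : SCER r) (h : IsCover r C U) : IsBorder r C U := by
  have hle := h.length_le hr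
  have hfirst := h.isOccAt_one.2.2
  have hlast := h.isOccAt_last.2.2
  rw [show U.length - C.length + 1 + C.length - 1 = U.length by omega] at hlast
  simp only [substr, Nat.add_sub_cancel_left, Nat.sub_self, List.drop_zero, List.take_length,
    Nat.add_sub_cancel] at hfirst hlast
  exact ⟨hle, hfirst, hlast⟩

theorem IsCover.isLeftSeed (hr : SCER r) (h : IsCover r C U) (hc : 0 < C.length) :
    IsLeftSeed r C U :=
  ⟨0, 0, le_rfl, hc, by simpa using h, by simpa using hr.equiv.refl []⟩

theorem IsBorder.take_equiv_drop (hr : SCER r) {B : List α} (h : IsBorder r B U) :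
    r (U.take B.length) (U.drop (U.length - B.length)) :=
  hr.equiv.trans (hr.equiv.symm h.2.1) h.2.2

theorem IsCover.exists_isOccAt_mem_Ioc (h : IsCover r C U) (hc : 0 < C.length) {t : ℕ}
    (ht : t < U.length - C.length + 1) :
    ∃ q ∈ Set.Ioc t (t + C.length), IsOccAt r C U q := by
  classical
  obtain ⟨m, x, hm, hx1, hxm, hocc, hgap⟩ := h
  have hmono : MonotoneOn x (Set.Icc 1 m) :=
    monotoneOn_of_le_succ Set.ordConnected_Icc fun k _ hk hk1 => by
      simp only [Order.succ_eq_add_one, Set.mem_Icc] at hk hk1 ⊢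
      have := hgap (k + 1) (by omega) hk1.2
      simp only [Nat.add_sub_cancel] at this
      omega
  have hex : ∃ k, 1 ≤ k ∧ k ≤ m ∧ t < x k := ⟨m, hm, le_rfl, hxm ▸ ht⟩
  obtain ⟨hk1, hkm, htk⟩ := Nat.find_spec hex
  set k := Nat.find hex
  have hxk_le : x k ≤ t + C.length := by
    rcases hk1.eq_or_lt with hk | hk
    · rw [← hk] at htk ⊢
      omega
    · have hprev : x (k - 1) ≤ t := by
        by_contra! hlt
        exact Nat.find_min hex (by omega : k - 1 < k) ⟨by omega, by omega, hlt⟩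
      have := hgap k hk hkm
      omega
  have hbounds : 1 ≤ x k ∧ x k ≤ x m :=
    ⟨hx1 ▸ hmono ⟨le_rfl, hm⟩ ⟨hk1, hkm⟩ hk1, hmono ⟨hk1, hkm⟩ ⟨hm, le_rfl⟩ hkm⟩
  exact ⟨x k, ⟨htk, hxk_le⟩, hbounds.1, hxm ▸ hbounds.2, hocc k hk1 hkm⟩

theorem isCover_of_isOccAt_one (h1 : IsOccAt r C U 1)
    (hwin : ∀ t < U.length - C.length + 1, ∃ q ∈ Set.Ioc t (t + C.length), IsOccAt r C U q) :
    IsCover r C U := by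
  set M := U.length - C.length + 1
  suffices ∀ n p, M - p = n → IsOccAt r C U p → ∃ (m : ℕ) (x : ℕ → ℕ), 1 ≤ m ∧ x 1 = p ∧
      x m = M ∧ (∀ k, 1 ≤ k → k ≤ m → r C (substr U (x k) (x k + C.length - 1))) ∧
      (∀ k, 1 < k → k ≤ m → x (k - 1) < x k ∧ x k ≤ x (k - 1) + C.length) from
    this _ 1 rfl h1
  intro n
  induction n using Nat.strong_induction_on with
  | _ n ih =>
    intro p hn hp
    rcases hp.2.1.lt_or_eq with hlt | hpM
    · obtain ⟨q, ⟨hpq, hqp⟩, hq⟩ := hwin p hlt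
      obtain ⟨m, x, hm, hx1, hxm, hocc, hgap⟩ := ih (M - q) (by have := hq.2.1; omega) q rfl hq
      refine ⟨m + 1, fun k => if k ≤ 1 then p else x (k - 1), by omega, by simp,
        by simp only [if_neg (show ¬ m + 1 ≤ 1 by omega), Nat.add_sub_cancel, hxm],
        fun k hk hkm => ?_, fun k hk hkm => ?_⟩
      · dsimp only
        split_ifs
        · exact hp.2.2
        · exact hocc _ (by omega) (by omega)
      · rcases (show k = 2 ∨ 2 < k by omega) with rfl | hk2
        · simpa [hx1] using And.intro hpq hqp
        · simpa [show ¬ k ≤ 1 by omega, show ¬ k - 1 ≤ 1 by omega, show k - 1 - 1 = k - 2 by omega]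
            using hgap (k - 1) (by omega) (by omega)
    · exact ⟨1, fun _ => p, le_rfl, rfl, hpM, fun _ _ _ => hp.2.2, fun k hk hkm => by omega⟩

theorem isOccAt_take_iff {n p : ℕ} (hcn : C.length ≤ n) (hn : n ≤ U.length) :
    IsOccAt r C (U.take n) p ↔ IsOccAt r C U p ∧ p ≤ n - C.length + 1 := by
  simp only [IsOccAt, List.length_take, min_eq_left hn]
  constructor
  · rintro ⟨hp1, hpn, hocc⟩
    rw [substr, List.take_take, min_eq_left (by omega)] at hocc
    exact ⟨⟨hp1, by omega, hocc⟩, hpn⟩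
  · rintro ⟨⟨hp1, -, hocc⟩, hpn⟩
    rw [substr, List.take_take, min_eq_left (by omega)]
    exact ⟨hp1, hpn, hocc⟩

theorem isOccAt_drop_iff {a p : ℕ} (hp : 1 ≤ p) (ha : a + C.length ≤ U.length) :
    IsOccAt r C (U.drop a) p ↔ IsOccAt r C U (a + p) := by
  have hsub : substr (U.drop a) p (p + C.length - 1) =
      substr U (a + p) (a + p + C.length - 1) := by
    simp only [substr, List.take_drop, List.drop_drop]
    congr 2 <;> omega
  simp only [IsOccAt, List.length_drop, hsub]
  constructor
  · rintro ⟨-, hpa, hocc⟩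
    exact ⟨by omega, by omega, hocc⟩
  · rintro ⟨-, hpa, hocc⟩
    exact ⟨hp, by omega, hocc⟩

theorem isOccAt_congr (hr : SCER r) (hc : 0 < C.length) {V W : List α} (hVW : r V W)
    {p : ℕ} : IsOccAt r C V p ↔ IsOccAt r C W p := by
  have transfer : ∀ {V W : List α}, r V W → IsOccAt r C V p → IsOccAt r C W p := by
    rintro V W hVW ⟨hp1, hpV, hocc⟩
    have hlen := hr.length_eq V W hVW
    refine ⟨hp1, hlen ▸ hpV, hr.equiv.trans hocc ?_⟩
    have hocc_len := hr.length_eq _ _ hocc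
    simp only [substr, List.length_drop, List.length_take] at hocc_len
    exact hr.substr_congr V W hVW p (p + C.length - 1) hp1 (by omega) (by omega)
  exact ⟨transfer hVW, transfer (hr.equiv.symm hVW)⟩

theorem isOccAt_take_iff_of_border (hr : SCER r) (hc : 0 < C.length) {b p : ℕ}
    (hcb : C.length ≤ b) (hbU : b ≤ U.length) (hbord : r (U.take b) (U.drop (U.length - b)))
    (hp : 1 ≤ p) : IsOccAt r C (U.take b) p ↔ IsOccAt r C U (U.length - b + p) :=
  (isOccAt_congr hr hc hbord).trans (isOccAt_drop_iff hp (by omega))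

theorem IsCover.take_of_border (hr : SCER r) (h : IsCover r C U) (hc : 0 < C.length) {b : ℕ}
    (hcb : C.length ≤ b) (hbU : b ≤ U.length) (hbord : r (U.take b) (U.drop (U.length - b))) :
    IsCover r C (U.take b) := by
  refine isCover_of_isOccAt_one ((isOccAt_take_iff hcb hbU).2 ⟨h.isOccAt_one, by omega⟩)
    fun t ht => ?_
  rw [List.length_take, min_eq_left hbU] at ht
  obtain ⟨q, ⟨htq, hqt⟩, hq⟩ := h.exists_isOccAt_mem_Ioc hc (t := U.length - b + t) (by omega)
  refine ⟨q - (U.length - b), ⟨by omega, by omega⟩,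
    (isOccAt_take_iff_of_border hr hc hcb hbU hbord (by omega)).2 ?_⟩
  rwa [show U.length - b + (q - (U.length - b)) = q by omega]

/-- The occurrences of `C` in `U[1:|U|-k]` and those in `U[1:b]`, moved to the suffix of `U`,
leave no gap longer than `|C|` because `k ≤ b`. -/
theorem isCover_of_take_of_border (hr : SCER r) (hc : 0 < C.length) {k b : ℕ} (hkb : k ≤ b)
    (hbU : b ≤ U.length) (hbord : r (U.take b) (U.drop (U.length - b)))
    (hpre : IsCover r C (U.take (U.length - k))) (hsuf : IsCover r C (U.take b)) :
    IsCover r C U := by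
  have hcb : C.length ≤ b := by simpa [hbU] using hsuf.length_le hr
  have hck : C.length ≤ U.length - k := by simpa using hpre.length_le hr
  have hpre_occ : ∀ {q}, IsOccAt r C (U.take (U.length - k)) q → IsOccAt r C U q :=
    fun hq => ((isOccAt_take_iff hck (by omega)).1 hq).1
  have hsuf_occ : ∀ {q}, 1 ≤ q → IsOccAt r C (U.take b) q →
      IsOccAt r C U (U.length - b + q) :=
    fun hq => (isOccAt_take_iff_of_border hr hc hcb hbU hbord hq).1
  refine isCover_of_isOccAt_one (hpre_occ hpre.isOccAt_one) fun t ht => ?_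
  by_cases ht_pre : t < U.length - k - C.length + 1
  · obtain ⟨q, hq, hocc⟩ := hpre.exists_isOccAt_mem_Ioc hc (t := t) (by simpa using ht_pre)
    exact ⟨q, hq, hpre_occ hocc⟩
  by_cases ht_suf : U.length - b ≤ t
  · obtain ⟨q, ⟨htq, hqt⟩, hocc⟩ :=
      hsuf.exists_isOccAt_mem_Ioc hc (t := t - (U.length - b)) (by simp [hbU]; omega)
    exact ⟨U.length - b + q, ⟨by omega, by omega⟩, hsuf_occ (by omega) hocc⟩
  · exact ⟨U.length - b + 1, ⟨by omega, by omega⟩, hsuf_occ le_rfl hsuf.isOccAt_one⟩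

theorem isProperCover_iff_of_border (hr : SCER r) {b : ℕ} (hbU : b < U.length)
    (hbord : r (U.take b) (U.drop (U.length - b)))
    (hmax : ∀ B, IsBorder r B U → B.length < U.length → B.length ≤ b) :
    IsProperCover r C U ↔ IsLeftSeed r C U ∧ IsCover r C (U.take b) := by
  constructor
  · rintro ⟨hcov, hlt⟩
    have hc := hcov.length_pos hlt
    exact ⟨hcov.isLeftSeed hr hc,
      hcov.take_of_border hr hc (hmax C (hcov.isBorder hr) hlt) hbU.le hbord⟩
  · rintro ⟨⟨k, l, hkl, hlc, hpre, -⟩, hsuf⟩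
    have hcb : C.length ≤ b := by simpa [hbU.le] using hsuf.length_le hr
    exact ⟨isCover_of_take_of_border hr (by omega) (by omega) hbU.le hbord hpre hsuf, by omega⟩

theorem exists_isProperCover_iff (hr : SCER r) {V : List α} (hUV : U <+: V) {c : ℕ} :
    (∃ C : List α, C.length = c ∧ IsProperCover r C U) ↔ IsProperCover r (V.take c) U := by
  have htake : ∀ {c}, c ≤ U.length → V.take c = U.take c := fun hc => by
    rw [List.prefix_iff_eq_take.1 hUV, List.take_take, min_eq_left hc]
  constructor
  · rintro ⟨C, rfl, hcov, hlt⟩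
    have hfirst := hcov.isOccAt_one.2.2
    simp only [substr, Nat.add_sub_cancel_left, Nat.sub_self, List.drop_zero] at hfirst
    rw [htake hlt.le]
    exact ⟨hcov.congr hr hfirst, by simpa using hlt⟩
  · intro hcov
    have hlt := hcov.2
    have hUV_len := hUV.length_le
    simp only [List.length_take] at hlt
    exact ⟨V.take c, by simp only [List.length_take]; omega, hcov⟩

end Covers

theorem stmt17 (r : List α → List α → Prop) (h : SCER r) (T : List α) (Bd L : ℕ → ℕ)
    (hB : BorderArr r T Bd) (hL : LCoverArr r T L) (i : ℕ)
    (h1 : 1 ≤ i) (h2 : i ≤ T.length) :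
    (∀ C : List α, IsProperCover r C (T.take i) ↔
      (IsLeftSeed r C (T.take i) ∧ IsCover r C (T.take (Bd i)))) ∧
    IsGreatest (insert 0 {l | IsLeftSeed r (T.take l) (T.take i) ∧
      IsCover r (T.take l) (T.take (Bd i))}) (L i) := by
  obtain ⟨⟨B, hB_len, hbi, hB_border⟩, hmax⟩ := hB i h1 h2
  have hU : (T.take i).length = i := by simp [h2]
  have hbU : (T.take i).take (Bd i) = T.take (Bd i) := by
    rw [List.take_take, min_eq_left hbi.le]
  have hbord := hB_len ▸ hB_border.take_equiv_drop h
  have key : ∀ C : List α, IsProperCover r C (T.take i) ↔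
      IsLeftSeed r C (T.take i) ∧ IsCover r C (T.take (Bd i)) := fun C => by
    rw [← hbU]
    exact isProperCover_iff_of_border h (by rwa [hU]) hbord
      fun B' hB' hlt => hmax ⟨B', rfl, by rwa [hU] at hlt, hB'⟩
  refine ⟨key, ?_⟩
  convert hL i h1 h2 using 3
  ext l
  simp only [← key, exists_isProperCover_iff h (List.take_prefix i T)]
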